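/- The family (P_U)_{U ⊆ Σ}, indexed by all 2^{|Σ|} subsets of Σ, is linearly independent over the prime field 𝔽_p; equivalently, the 𝔽_p-vector space 𝒱_Σ has dimension 2^{|Σ|}. -/

import Mathlib

/- Proposition 10 of Pellarin, "A sum-shuffle formula for zeta values in Tate algebras". -/

set_option synthInstance.maxHeartbeats 1000000
set_option maxHeartbeats 1000000

noncomputable section

namespace HasseStability

variable (p e : ℕ) [Fact p.Prime] (σ : Type) [Fintype σ] [DecidableEq σ]

abbrev Fq : Type := GaloisField p e

instance : Fintype (Fq p e) := Fintype.ofFinite _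

/-- `𝔽_q[θ][t_i : i ∈ Σ]`, viewed as polynomials in `θ` over `𝔽_q[t_i : i ∈ Σ]`. -/
abbrev Rθ : Type := Polynomial (MvPolynomial σ (Fq p e))

/-- `P_U = [1]·S_1(1; σ_U) = Σ_{λ∈𝔽_q} ((θ-λ)^{q-1} - 1)·∏_{i∈U}(t_i - λ)`. -/
def P (U : Finset σ) : Rθ p e σ :=
  ∑ l : Fq p e,
    ((Polynomial.X - Polynomial.C (MvPolynomial.C l)) ^ (p ^ e - 1) - 1) *
      Polynomial.C (∏ i ∈ U, (MvPolynomial.X i - MvPolynomial.C l))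

/-- `𝒱_U`: the `𝔽_p`-linear span of the polynomials `P_W`, `W ⊆ U`. -/
def V (U : Finset σ) : Submodule (ZMod p) (Rθ p e σ) :=
  Submodule.span (ZMod p) {x | ∃ W ⊆ U, x = P p e σ W}

/-! At `θ = 0` every summand of `P_U` with `λ ≠ 0` vanishes, because `(-λ)^(q-1) = 1`, so
`P_U(0) = -∏_{i∈U} t_i`. Distinct subsets give distinct squarefree monomials, which are linearly
independent over `𝔽_q`, hence over `𝔽_p`. -/

open MvPolynomial in
theorem _root_.MvPolynomial.prod_X_eq_monomial {σ R : Type*} [CommSemiring R] (U : Finset σ) :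
    ∏ i ∈ U, (X i : MvPolynomial σ R) = monomial (∑ i ∈ U, Finsupp.single i 1) 1 := by
  simp only [X, monomial_sum_one]

open MvPolynomial in
theorem _root_.MvPolynomial.linearIndependent_prod_X {σ R : Type*} [CommSemiring R] :
    LinearIndependent R (fun U : Finset σ => ∏ i ∈ U, (X i : MvPolynomial σ R)) := by
  have hinj : Function.Injective fun U : Finset σ => ∑ i ∈ U, Finsupp.single i 1 := by
    intro U V h
    simpa [Finsupp.toMultiset_sum_single] using congrArg Finsupp.toMultiset h
  simpa [prod_X_eq_monomial, Function.comp_def, coe_basisMonomials] using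
    (basisMonomials σ R).linearIndependent.comp _ hinj

theorem _root_.FiniteField.one_sub_pow_card_sub_one {K : Type*} [Field K] [Fintype K]
    [DecidableEq K] (a : K) : 1 - a ^ (Fintype.card K - 1) = if a = 0 then 1 else 0 := by
  split_ifs with ha
  · rw [ha, zero_pow (by have := Fintype.one_lt_card (α := K); omega), sub_zero]
  · rw [FiniteField.pow_card_sub_one_eq_one a ha, sub_self]

theorem card_Fq (he : e ≠ 0) : Fintype.card (Fq p e) = p ^ e := by
  rw [← Nat.card_eq_fintype_card, GaloisField.card p e he]

open MvPolynomial in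
omit [Fintype σ] [DecidableEq σ] in
theorem eval_zero_P (he : e ≠ 0) (U : Finset σ) : (P p e σ U).eval 0 = -∏ i ∈ U, X i := by
  classical
  have hsummand (l : Fq p e) : (-C l : MvPolynomial σ (Fq p e)) ^ (p ^ e - 1) - 1 =
      -C (if l = 0 then 1 else 0) := by
    have h := FiniteField.one_sub_pow_card_sub_one (-l)
    rw [card_Fq p e he, neg_eq_zero] at h
    simp [← h]
  simp [P, Polynomial.eval_finsetSum, hsummand, Polynomial.eval_prod]

/-- **Lemma 13**: the polynomials `P_U`, `U ⊆ Σ`, are linearly independent over `𝔽_p`;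
equivalently, `𝒱_Σ` has dimension `2^{|Σ|}` over `𝔽_p`. -/
theorem P_linearIndependent (he : 1 ≤ e) :
    LinearIndependent (ZMod p) (fun U : Finset σ => P p e σ U) := by
  have heval : (Polynomial.leval 0).restrictScalars (Fq p e) ∘ (fun U : Finset σ => P p e σ U) =
      -fun U => ∏ i ∈ U, MvPolynomial.X i :=
    funext (eval_zero_P p e σ (Nat.one_le_iff_ne_zero.mp he))
  have : LinearIndependent (Fq p e) (fun U : Finset σ => P p e σ U) := by
    apply LinearIndependent.of_comp ((Polynomial.leval 0).restrictScalars (Fq p e))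
    rw [heval]
    exact MvPolynomial.linearIndependent_prod_X.neg
  exact this.restrict_scalars' (ZMod p)

end HasseStability
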